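/- Let $V$ be a finite-dimensional vector space, $\mathfrak{g}$ a Lie algebra with basis split as before into $\{e_a\}$ and $\{e_\alpha\}$ ($\mathfrak{h}$ a subalgebra), $G_{ab}$ a symmetric nondegenerate $Ad(H)$-invariant matrix, $\hat\gamma^a$ Clifford generators with $\{\hat\gamma^a,\hat\gamma^b\}=2G^{ab}E$, $\Lambda_\alpha = -\tfrac18 G_{ac}C^a_{\alpha b}[\hat\gamma^b,\hat\gamma^c]$, and define $\Gamma_a = -\tfrac14\Gamma^d_{ba}\hat\gamma^b\hat\gamma_d$ with $\Gamma^a_{bc} = -\tfrac12 C^a_{bc} - \tfrac12 G^{ad}(G_{ec}C^e_{bd}+G_{eb}C^e_{cd})$ and $\Gamma = \hat\gamma^a\Gamma_a$. Then $[\Gamma, \Lambda_\alpha] = C^{\beta}_{a\alpha}\,\hat\gamma^a\Lambda_\beta$ for every $\alpha$. -/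

import Mathlib

/-!
Both sides are cubic in the generators, so the identity is proved coefficientwise, with no
reordering of Clifford monomials. The Clifford relations and `Ad(H)`-invariance give
`[γ^x, Λ_α] = C^x_{αf} γ^f`; hence commuting with `Λ_α` acts on the coefficient tensor
`T_{abe} = -¼ Γ^d_{ba} G_{de}` of `Γ = T_{abe} γ^a γ^b γ^e` as the derivation `ad(e_α)`.
Since `T` is a sum of slot permutations of `K_{xyz} = G_{dz} C^d_{xy}`, it remains to know
`ad(e_α) · K`. By the Jacobi identity for `(e_x, e_y, e_α)` this is the contribution of the
`𝔥`-components `C^β_{xα}` of `[e_x, e_α]`, which is exactly the coefficient tensor of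
`C^β_{aα} γ^a Λ_β`.
-/

open Finset

namespace SpinConnection

variable {I : Type*}

def derivAct [Fintype I] (D : I → I → ℝ) (T : I → I → I → ℝ) (p q r : I) : ℝ :=
  ∑ a, (T a q r * D a p + T p a r * D a q + T p q a * D a r)

section Clifford

variable {A : Type*} [Ring A] [Algebra ℝ A]

lemma clifford_mul_mul_sub_mul {γ : I → A} {g : I → I → ℝ}
    (hCl : ∀ a b, γ a * γ b + γ b * γ a = (2 * g a b) • (1 : A)) (b c x : I) :
    γ b * γ c * γ x - γ x * (γ b * γ c) = (2 * g c x) • γ b - (2 * g b x) • γ c := by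
  have hcx : γ c * γ x = (2 * g c x) • (1 : A) - γ x * γ c := eq_sub_of_add_eq (hCl c x)
  have hbx : γ b * γ x = (2 * g b x) • (1 : A) - γ x * γ b := eq_sub_of_add_eq (hCl b x)
  rw [mul_assoc, hcx, mul_sub, mul_smul_comm, mul_one, ← mul_assoc, hbx, sub_mul, smul_mul_assoc,
    one_mul, ← mul_assoc]
  abel

variable [Fintype I]

def cubic (γ : I → A) (T : I → I → I → ℝ) : A :=
  ∑ p, ∑ q, ∑ r, T p q r • (γ p * (γ q * γ r))

def bivector (γ : I → A) (l : I → I → ℝ) : A :=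
  ∑ b, ∑ c, l b c • (γ b * γ c - γ c * γ b)

lemma cubic_mul_sub_mul (γ : I → A) (D : I → I → ℝ) (L : A)
    (hL : ∀ x, γ x * L - L * γ x = ∑ f, D x f • γ f) (T : I → I → I → ℝ) :
    cubic γ T * L - L * cubic γ T = cubic γ (derivAct D T) := by
  have hmono : ∀ a b e, γ a * (γ b * γ e) * L - L * (γ a * (γ b * γ e))
      = (γ a * L - L * γ a) * (γ b * γ e) + γ a * ((γ b * L - L * γ b) * γ e)
        + γ a * (γ b * (γ e * L - L * γ e)) := by
    intro a b e; noncomm_ring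
  calc cubic γ T * L - L * cubic γ T
      = ∑ p, ∑ q, ∑ r, T p q r • (γ p * (γ q * γ r) * L - L * (γ p * (γ q * γ r))) := by
        simp only [cubic, sum_mul, mul_sum, ← sum_sub_distrib, smul_mul_assoc, mul_smul_comm,
          smul_sub]
    _ = ∑ p, ∑ q, ∑ r, ∑ f, (T p q r * D p f) • (γ f * (γ q * γ r))
        + ∑ p, ∑ q, ∑ r, ∑ f, (T p q r * D q f) • (γ p * (γ f * γ r))
        + ∑ p, ∑ q, ∑ r, ∑ f, (T p q r * D r f) • (γ p * (γ q * γ f)) := by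
        simp only [hmono, hL, sum_mul, mul_sum, smul_mul_assoc, mul_smul_comm, smul_add,
          sum_add_distrib, smul_sum, smul_smul]
    _ = cubic γ (derivAct D T) := by
        simp only [cubic, derivAct, add_smul, sum_add_distrib, sum_smul]
        congr 1; congr 1
        · exact (sum_congr rfl fun _ _ => sum_comm_cycle).trans
            (sum_comm.trans (sum_congr rfl fun _ _ => sum_comm_cycle.symm))
        · exact sum_congr rfl fun _ _ => sum_comm_cycle.trans (sum_congr rfl fun _ _ => sum_comm)
        · exact sum_congr rfl fun _ _ => sum_congr rfl fun _ _ => sum_comm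

lemma bivector_sum (γ : I → A) (f : I → I → I → ℝ) :
    bivector γ (fun b c => ∑ a, f a b c) = ∑ a, ∑ b, ∑ c, f a b c • (γ b * γ c - γ c * γ b) := by
  simp only [bivector, sum_smul]
  exact sum_comm_cycle

lemma mul_bivector (γ : I → A) (l : I → I → ℝ) (p : I) :
    γ p * bivector γ l = ∑ q, ∑ r, (l q r - l r q) • (γ p * (γ q * γ r)) := by
  simp only [bivector, mul_sum, mul_smul_comm, mul_sub, smul_sub, sum_sub_distrib, sub_smul]
  rw [sum_comm (f := fun b c => l b c • (γ p * (γ c * γ b)))]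

lemma sum_smul_mul_bivector {κ : Type*} [Fintype κ] (γ : I → A) (s : I → κ → ℝ)
    (l : κ → I → I → ℝ) :
    ∑ p, ∑ β, s p β • (γ p * bivector γ (l β))
      = cubic γ (fun p q r => ∑ β, s p β * (l β q r - l β r q)) := by
  simp only [mul_bivector, cubic, smul_sum, smul_smul, sum_smul]
  exact sum_congr rfl fun _ _ => sum_comm_cycle.symm

lemma sum_mul_sum_sum_smul_mul_eq_cubic (γ : I → A) (k : I → I → I → ℝ) (G : I → I → ℝ) :
    ∑ a, γ a * ∑ b, ∑ d, k d b a • (γ b * ∑ e, G d e • γ e)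
      = cubic γ (fun a b e => ∑ d, k d b a * G d e) := by
  simp only [cubic, mul_sum, smul_sum, mul_smul_comm, smul_smul, sum_smul]
  exact sum_congr rfl fun _ _ => sum_congr rfl fun _ _ => sum_comm

lemma clifford_mul_bivector_sub {γ : I → A} {g : I → I → ℝ}
    (hCl : ∀ a b, γ a * γ b + γ b * γ a = (2 * g a b) • (1 : A)) (l : I → I → ℝ) (x : I) :
    γ x * bivector γ l - bivector γ l * γ x
      = ∑ c, (4 * ∑ b, (l b c - l c b) * g b x) • γ c := by
  have hpair : ∀ b c, γ x * (γ b * γ c - γ c * γ b) - (γ b * γ c - γ c * γ b) * γ x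
      = (4 * g b x) • γ c - (4 * g c x) • γ b := by
    intro b c
    calc _ = γ c * γ b * γ x - γ x * (γ c * γ b) - (γ b * γ c * γ x - γ x * (γ b * γ c)) := by
            noncomm_ring
      _ = _ := by rw [clifford_mul_mul_sub_mul hCl, clifford_mul_mul_sub_mul hCl]; module
  have hexp : γ x * bivector γ l - bivector γ l * γ x
      = ∑ b, ∑ c, l b c • ((4 * g b x) • γ c - (4 * g c x) • γ b) := by
    rw [bivector, mul_sum, sum_mul, ← sum_sub_distrib]
    refine sum_congr rfl fun b _ => ?_
    rw [mul_sum, sum_mul, ← sum_sub_distrib]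
    refine sum_congr rfl fun c _ => ?_
    rw [mul_smul_comm, smul_mul_assoc, ← smul_sub, hpair]
  rw [hexp]
  simp only [smul_sub, smul_smul, sum_sub_distrib, sub_mul, mul_sub, sub_smul, mul_sum, sum_smul]
  rw [sum_comm (f := fun b c => (l b c * (4 * g b x)) • γ c)]
  congr 1 <;> exact sum_congr rfl fun _ _ => sum_congr rfl fun _ _ => by congr 1; ring

end Clifford

section StructureConstants

variable [Fintype I] {J : Type*}
  (C : (I ⊕ J) → (I ⊕ J) → (I ⊕ J) → ℝ) (G : I → I → ℝ)

def bracketLower (x y z : I) : ℝ := ∑ d, G d z * C (Sum.inl x) (Sum.inl y) (Sum.inl d)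

def adMatrix (α : J) (a p : I) : ℝ := C (Sum.inr α) (Sum.inl p) (Sum.inl a)

def adLower (β : J) (x y : I) : ℝ := ∑ a, G a y * C (Sum.inr β) (Sum.inl x) (Sum.inl a)

noncomputable def spinConnCoeff (a b e : I) : ℝ :=
  1/8 * (bracketLower C G b a e + bracketLower C G b e a + bracketLower C G a e b)

def adOfBracketH [Fintype J] (α : J) (x y z : I) : ℝ :=
  ∑ β, C (Sum.inl x) (Sum.inr α) (Sum.inr β) * adLower C G β y z

variable {C G}

lemma adLower_antisymm (hanti : ∀ X Y Z, C X Y Z = - C Y X Z)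
    (hAdH : ∀ (b c : I) (α : J), ∑ a, (G a b * C (Sum.inl c) (Sum.inr α) (Sum.inl a)
      + G a c * C (Sum.inl b) (Sum.inr α) (Sum.inl a)) = 0) (β : J) (x y : I) :
    adLower C G β x y = - adLower C G β y x := by
  have h := hAdH x y β
  simp only [adLower, hanti (Sum.inr β), mul_neg, sum_neg_distrib, sum_add_distrib] at h ⊢
  linarith

lemma adOfBracketH_antisymm [Fintype J] (hanti : ∀ X Y Z, C X Y Z = - C Y X Z)
    (hAdH : ∀ (b c : I) (α : J), ∑ a, (G a b * C (Sum.inl c) (Sum.inr α) (Sum.inl a)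
      + G a c * C (Sum.inl b) (Sum.inr α) (Sum.inl a)) = 0) (α : J) (x y z : I) :
    adOfBracketH C G α x y z = - adOfBracketH C G α x z y := by
  simp only [adOfBracketH, adLower_antisymm hanti hAdH _ y z, mul_neg, sum_neg_distrib]

lemma sum_mul_adMatrix (hanti : ∀ X Y Z, C X Y Z = - C Y X Z) (hGsym : ∀ a b, G a b = G b a)
    (hAdH : ∀ (b c : I) (α : J), ∑ a, (G a b * C (Sum.inl c) (Sum.inr α) (Sum.inl a)
      + G a c * C (Sum.inl b) (Sum.inr α) (Sum.inl a)) = 0) (α : J) (d z : I) :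
    ∑ a, G d a * adMatrix C α a z = - adLower C G α d z := by
  rw [adLower_antisymm hanti hAdH, neg_neg]
  simp only [adMatrix, adLower, hGsym d]

lemma derivAct_bracketLower [Fintype J] (hanti : ∀ X Y Z, C X Y Z = - C Y X Z)
    (hjac : ∀ X Y Z W, ∑ V, (C X Y V * C V Z W + C Y Z V * C V X W
      + C Z X V * C V Y W) = 0)
    (hsub : ∀ (α β : J) (a : I), C (Sum.inr α) (Sum.inr β) (Sum.inl a) = 0)
    (hGsym : ∀ a b, G a b = G b a)
    (hAdH : ∀ (b c : I) (α : J), ∑ a, (G a b * C (Sum.inl c) (Sum.inr α) (Sum.inl a)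
      + G a c * C (Sum.inl b) (Sum.inr α) (Sum.inl a)) = 0) (α : J) (x y z : I) :
    derivAct (adMatrix C α) (bracketLower C G) x y z
      = adOfBracketH C G α x y z - adOfBracketH C G α y x z := by
  -- Split the intermediate index of the Jacobi identity into its `𝔪`-part (giving `derivAct`)
  -- and its `𝔥`-part (giving `adOfBracketH`); the `[e_x, e_y]_𝔥`-term drops out by `hsub`.
  have hJ : ∑ v, ∑ w, G w z * (C (Sum.inl x) (Sum.inl y) v * C v (Sum.inr α) (Sum.inl w)
      + C (Sum.inl y) (Sum.inr α) v * C v (Sum.inl x) (Sum.inl w)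
      + C (Sum.inr α) (Sum.inl x) v * C v (Sum.inl y) (Sum.inl w)) = 0 := by
    rw [sum_comm]
    simp [← mul_sum, hjac]
  simp only [Fintype.sum_sum_type, hsub, mul_zero, sum_const_zero, add_zero, mul_add,
    sum_add_distrib] at hJ
  have hI : derivAct (adMatrix C α) (bracketLower C G) x y z
      = ∑ v, ∑ w, G w z *
          (C (Sum.inl x) (Sum.inl y) (Sum.inl v) * C (Sum.inl v) (Sum.inr α) (Sum.inl w))
        + ∑ v, ∑ w, G w z *
          (C (Sum.inl y) (Sum.inr α) (Sum.inl v) * C (Sum.inl v) (Sum.inl x) (Sum.inl w))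
        + ∑ v, ∑ w, G w z *
          (C (Sum.inr α) (Sum.inl x) (Sum.inl v) * C (Sum.inl v) (Sum.inl y) (Sum.inl w)) := by
    have hlast : ∑ a, bracketLower C G x y a * adMatrix C α a z
        = ∑ v, C (Sum.inl x) (Sum.inl y) (Sum.inl v) * -adLower C G α v z := by
      simp only [bracketLower, sum_mul]
      rw [sum_comm]
      refine sum_congr rfl fun v _ => ?_
      rw [← sum_mul_adMatrix hanti hGsym hAdH, mul_sum]
      exact sum_congr rfl fun a _ => by ring
    simp only [derivAct, sum_add_distrib, hlast]
    simp only [bracketLower, adLower, adMatrix, sum_mul, mul_sum, ← sum_neg_distrib, mul_neg,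
      ← sum_add_distrib]
    refine sum_congr rfl fun v _ => sum_congr rfl fun w _ => ?_
    rw [hanti (Sum.inl y) (Sum.inr α), hanti (Sum.inl v) (Sum.inl x),
      hanti (Sum.inl v) (Sum.inr α)]
    ring
  have hH : adOfBracketH C G α x y z - adOfBracketH C G α y x z
      = -(∑ β, ∑ w, G w z *
            (C (Sum.inl y) (Sum.inr α) (Sum.inr β) * C (Sum.inr β) (Sum.inl x) (Sum.inl w))
          + ∑ β, ∑ w, G w z *
            (C (Sum.inr α) (Sum.inl x) (Sum.inr β) * C (Sum.inr β) (Sum.inl y) (Sum.inl w))) := by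
    simp only [adOfBracketH, adLower, mul_sum, ← sum_sub_distrib, ← sum_add_distrib,
      ← sum_neg_distrib]
    refine sum_congr rfl fun β _ => sum_congr rfl fun w _ => ?_
    rw [hanti (Sum.inr α) (Sum.inl x), hanti (Sum.inl y) (Sum.inr α)]
    ring
  linarith

lemma sum_mul_sum_inv_mul [DecidableEq I] {Ginv : I → I → ℝ}
    (hGinv : ∀ a b, ∑ c, G a c * Ginv c b = if a = b then 1 else 0) (f : I → ℝ) (e : I) :
    ∑ d, G e d * ∑ d', Ginv d d' * f d' = f e := by
  have hmul : Matrix.of G * Matrix.of Ginv = 1 := by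
    ext a b
    simp [Matrix.mul_apply, hGinv, Matrix.one_apply]
  change Matrix.mulVec (Matrix.of G) (Matrix.mulVec (Matrix.of Ginv) f) e = f e
  rw [Matrix.mulVec_mulVec, hmul, Matrix.one_mulVec]

lemma sum_adLower_mul_inv [DecidableEq I] {Ginv : I → I → ℝ}
    (hGinv : ∀ a b, ∑ c, G a c * Ginv c b = if a = b then 1 else 0) (β : J) (c x : I) :
    ∑ b, adLower C G β c b * Ginv b x = adMatrix C β x c := by
  calc ∑ b, adLower C G β c b * Ginv b x
      = ∑ a, C (Sum.inr β) (Sum.inl c) (Sum.inl a) * ∑ b, G a b * Ginv b x := by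
        simp only [adLower, sum_mul, mul_sum]
        rw [sum_comm]
        exact sum_congr rfl fun _ _ => sum_congr rfl fun _ _ => by ring
    _ = adMatrix C β x c := by simp [hGinv, adMatrix]

lemma sum_connection_mul [DecidableEq I] {Ginv : I → I → ℝ} (hGsym : ∀ a b, G a b = G b a)
    (hGinv : ∀ a b, ∑ c, G a c * Ginv c b = if a = b then 1 else 0)
    {Γc : I → I → I → ℝ}
    (hΓc : ∀ a b c, Γc a b c = -(1/2) * C (Sum.inl b) (Sum.inl c) (Sum.inl a)
      - (1/2) * ∑ d, ∑ e, Ginv a d *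
        (G e c * C (Sum.inl b) (Sum.inl d) (Sum.inl e)
          + G e b * C (Sum.inl c) (Sum.inl d) (Sum.inl e))) (a b e : I) :
    ∑ d, -(1/4) * Γc d b a * G d e = spinConnCoeff C G a b e := by
  set f : I → ℝ := fun d' => ∑ e', (G e' a * C (Sum.inl b) (Sum.inl d') (Sum.inl e')
    + G e' b * C (Sum.inl a) (Sum.inl d') (Sum.inl e'))
  have hterm : ∀ d, -(1/4) * Γc d b a * G d e
      = 1/8 * (G d e * C (Sum.inl b) (Sum.inl a) (Sum.inl d))
        + 1/8 * (G e d * ∑ d', Ginv d d' * f d') := by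
    intro d
    have hinner : ∑ d', ∑ e', Ginv d d' * (G e' a * C (Sum.inl b) (Sum.inl d') (Sum.inl e')
        + G e' b * C (Sum.inl a) (Sum.inl d') (Sum.inl e')) = ∑ d', Ginv d d' * f d' := by
      simp only [f, mul_sum]
    rw [hΓc, hGsym d e, hinner]
    ring
  simp only [hterm, sum_add_distrib, ← mul_sum, sum_mul_sum_inv_mul hGinv, f]
  simp only [spinConnCoeff, bracketLower]
  ring

lemma derivAct_connection [Fintype J] (hanti : ∀ X Y Z, C X Y Z = - C Y X Z)
    (hjac : ∀ X Y Z W, ∑ V, (C X Y V * C V Z W + C Y Z V * C V X W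
      + C Z X V * C V Y W) = 0)
    (hsub : ∀ (α β : J) (a : I), C (Sum.inr α) (Sum.inr β) (Sum.inl a) = 0)
    (hGsym : ∀ a b, G a b = G b a)
    (hAdH : ∀ (b c : I) (α : J), ∑ a, (G a b * C (Sum.inl c) (Sum.inr α) (Sum.inl a)
      + G a c * C (Sum.inl b) (Sum.inr α) (Sum.inl a)) = 0) (α : J) (p q r : I) :
    derivAct (adMatrix C α) (spinConnCoeff C G) p q r = -(1/4) * adOfBracketH C G α p q r := by
  set E := derivAct (adMatrix C α) (bracketLower C G)
  trans 1/8 * (E q p r + E q r p + E p r q)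
  · simp only [E, derivAct, spinConnCoeff, mul_sum, ← sum_add_distrib]
    exact sum_congr rfl fun _ _ => by ring
  simp only [E, derivAct_bracketLower hanti hjac hsub hGsym hAdH]
  have h1 := adOfBracketH_antisymm hanti hAdH α q r p
  have h2 := adOfBracketH_antisymm hanti hAdH α r q p
  have h3 := adOfBracketH_antisymm hanti hAdH α p r q
  linear_combination (1/8) * h1 - (1/8) * h2 + (1/8) * h3

end StructureConstants

section Spinor

variable [Fintype I] {J : Type*} {A : Type*} [Ring A] [Algebra ℝ A]

noncomputable def spinGen (γ : I → A) (C : (I ⊕ J) → (I ⊕ J) → (I ⊕ J) → ℝ) (G : I → I → ℝ)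
    (α : J) : A :=
  bivector γ (fun b c => -(1/8) * adLower C G α b c)

variable {C : (I ⊕ J) → (I ⊕ J) → (I ⊕ J) → ℝ} {G : I → I → ℝ}

lemma sum_smul_eq_spinGen (γ : I → A) (α : J) :
    ∑ a, ∑ b, ∑ c, (-(1/8) * G a c * C (Sum.inr α) (Sum.inl b) (Sum.inl a)) •
      (γ b * γ c - γ c * γ b) = spinGen γ C G α := by
  rw [spinGen, ← bivector_sum]
  congr 1
  ext b c
  simp only [adLower, mul_sum]
  exact sum_congr rfl fun _ _ => by ring

lemma mul_spinGen_sub [DecidableEq I] {γ : I → A} {Ginv : I → I → ℝ}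
    (hanti : ∀ X Y Z, C X Y Z = - C Y X Z)
    (hGinv : ∀ a b, ∑ c, G a c * Ginv c b = if a = b then 1 else 0)
    (hAdH : ∀ (b c : I) (α : J), ∑ a, (G a b * C (Sum.inl c) (Sum.inr α) (Sum.inl a)
      + G a c * C (Sum.inl b) (Sum.inr α) (Sum.inl a)) = 0)
    (hCl : ∀ a b, γ a * γ b + γ b * γ a = (2 * Ginv a b) • (1 : A)) (α : J) (x : I) :
    γ x * spinGen γ C G α - spinGen γ C G α * γ x = ∑ f, adMatrix C α x f • γ f := by
  rw [spinGen, clifford_mul_bivector_sub hCl]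
  refine sum_congr rfl fun c _ => ?_
  rw [← sum_adLower_mul_inv hGinv, mul_sum]
  congr 1
  refine sum_congr rfl fun b _ => ?_
  rw [adLower_antisymm hanti hAdH α b c]
  ring

lemma sum_smul_mul_spinGen [Fintype J] (γ : I → A) (hanti : ∀ X Y Z, C X Y Z = - C Y X Z)
    (hAdH : ∀ (b c : I) (α : J), ∑ a, (G a b * C (Sum.inl c) (Sum.inr α) (Sum.inl a)
      + G a c * C (Sum.inl b) (Sum.inr α) (Sum.inl a)) = 0) (α : J) :
    ∑ a, ∑ β, C (Sum.inl a) (Sum.inr α) (Sum.inr β) • (γ a * spinGen γ C G β)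
      = cubic γ (fun p q r => -(1/4) * adOfBracketH C G α p q r) := by
  simp only [spinGen]
  rw [sum_smul_mul_bivector]
  congr 1
  ext p q r
  simp only [adOfBracketH, mul_sum]
  refine sum_congr rfl fun β _ => ?_
  rw [adLower_antisymm hanti hAdH β r q]
  ring

end Spinor

end SpinConnection

open SpinConnection

theorem spin_connection_commutator
    {I J : Type*} [Fintype I] [Fintype J] [DecidableEq I]
    {A : Type*} [Ring A] [Algebra ℝ A]
    (C : (I ⊕ J) → (I ⊕ J) → (I ⊕ J) → ℝ)
    (hanti : ∀ X Y Z, C X Y Z = - C Y X Z)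
    (hjac : ∀ X Y Z W, ∑ V, (C X Y V * C V Z W + C Y Z V * C V X W
      + C Z X V * C V Y W) = 0)
    (hsub : ∀ (α β : J) (a : I), C (Sum.inr α) (Sum.inr β) (Sum.inl a) = 0)
    (G Ginv : I → I → ℝ)
    (hGsym : ∀ a b, G a b = G b a)
    (hGinv : ∀ a b, ∑ c, G a c * Ginv c b = if a = b then 1 else 0)
    (hAdH : ∀ (b c : I) (α : J), ∑ a, (G a b * C (Sum.inl c) (Sum.inr α) (Sum.inl a)
      + G a c * C (Sum.inl b) (Sum.inr α) (Sum.inl a)) = 0)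
    (γ : I → A)
    (hCl : ∀ a b, γ a * γ b + γ b * γ a = (2 * Ginv a b) • (1 : A))
    (Λ : J → A)
    (hΛ : ∀ α, Λ α = ∑ a, ∑ b, ∑ c,
      (-(1/8) * G a c * C (Sum.inr α) (Sum.inl b) (Sum.inl a)) •
        (γ b * γ c - γ c * γ b))
    (Γc : I → I → I → ℝ)
    (hΓc : ∀ a b c, Γc a b c = -(1/2) * C (Sum.inl b) (Sum.inl c) (Sum.inl a)
      - (1/2) * ∑ d, ∑ e, Ginv a d *
        (G e c * C (Sum.inl b) (Sum.inl d) (Sum.inl e)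
          + G e b * C (Sum.inl c) (Sum.inl d) (Sum.inl e)))
    (Γa : I → A)
    (hΓa : ∀ a, Γa a = ∑ b, ∑ d,
      (-(1/4) * Γc d b a) • (γ b * (∑ e, G d e • γ e)))
    (Γt : A)
    (hΓt : Γt = ∑ a, γ a * Γa a) :
    ∀ α : J, Γt * Λ α - Λ α * Γt
      = ∑ a, ∑ β : J, C (Sum.inl a) (Sum.inr α) (Sum.inr β) • (γ a * Λ β) := by
  intro α
  obtain rfl : Λ = spinGen γ C G := funext fun β => (hΛ β).trans (sum_smul_eq_spinGen γ β)
  simp_rw [hΓt, hΓa]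
  rw [sum_mul_sum_sum_smul_mul_eq_cubic,
    cubic_mul_sub_mul γ _ _ (mul_spinGen_sub hanti hGinv hAdH hCl α),
    sum_smul_mul_spinGen γ hanti hAdH]
  congr 1
  ext p q r
  rw [← derivAct_connection hanti hjac hsub hGsym hAdH]
  congr 1
  ext a b e
  exact sum_connection_mul hGsym hGinv hΓc a b e
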